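/- arXiv:math/0305061 — 2 statements merged into one kernel-verified Lean document; each statement's English description precedes it below -/
import Mathlib

section
/- Let p ≥ 1, m ≥ 1 be natural numbers, let J ⊆ ℝ^p be an open connected set, let s₀ ∈ J, and for each α ∈ {1,…,p} let Z_α : J → M_m(ℝ) be a continuous matrix-valued function. If Y₁, Y₂ : J → M_m(ℝ) are C¹ functions satisfying ∂Y_i/∂s^α(s) = Z_α(s)·Y_i(s) for every s ∈ J and every α ∈ {1,…,p} (i = 1, 2), and if Y₁(s₀) = Y₂(s₀), then Y₁(s) = Y₂(s) for all s ∈ J. -/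
/-!
Along a segment `t ↦ x + t (y - x)` inside `J`, every solution satisfies the linear ODE
`f' = A(t) f` with `A(t) = ∑ α, (y - x)_α Z_α(x + t (y - x))`, whose right-hand side is Lipschitz
in `f` uniformly on `[0, 1]` because `A` is continuous. ODE uniqueness therefore carries the
equality `Y₁ = Y₂` along segments in `J`; since `J` is open every point sees a ball of such
segments, and connectedness of `J` spreads the equality from `s₀` to all of `J`.
-/

/-- Product of square `m × m` real matrices represented as plain functions
`Fin m → Fin m → ℝ`. -/
def matMul {m : ℕ} (X Y : Fin m → Fin m → ℝ) : Fin m → Fin m → ℝ :=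
  fun i j => ∑ k, X i k * Y k j

open Set AffineMap Topology

section MatMul

variable {m : ℕ}

lemma matMul_sub (A X Y : Fin m → Fin m → ℝ) :
    matMul A (X - Y) = matMul A X - matMul A Y := by
  funext i j
  simp only [matMul, Pi.sub_apply, mul_sub, Finset.sum_sub_distrib]

lemma sum_smul_matMul {ι : Type*} (s : Finset ι) (c : ι → ℝ) (A : ι → Fin m → Fin m → ℝ)
    (Y : Fin m → Fin m → ℝ) :
    matMul (∑ α ∈ s, c α • A α) Y = ∑ α ∈ s, c α • matMul (A α) Y := by
  funext i j
  simp only [matMul, Finset.sum_apply, Pi.smul_apply, smul_eq_mul, Finset.sum_mul,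
    Finset.mul_sum, mul_assoc]
  exact Finset.sum_comm

lemma norm_matMul_le (A X : Fin m → Fin m → ℝ) : ‖matMul A X‖ ≤ m * ‖A‖ * ‖X‖ := by
  refine (pi_norm_le_iff_of_nonneg (by positivity)).2 fun i ↦
    (pi_norm_le_iff_of_nonneg (by positivity)).2 fun j ↦ ?_
  calc ‖∑ k, A i k * X k j‖ ≤ ∑ k, ‖A i k‖ * ‖X k j‖ :=
        norm_sum_le_of_le _ fun k _ ↦ norm_mul_le _ _
    _ ≤ ∑ _k : Fin m, ‖A‖ * ‖X‖ := by
        gcongr with k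
        · exact (norm_le_pi_norm (A i) k).trans (norm_le_pi_norm A i)
        · exact (norm_le_pi_norm (X k) j).trans (norm_le_pi_norm X k)
    _ = m * ‖A‖ * ‖X‖ := by simp [mul_assoc]

lemma lipschitzWith_matMul (A : Fin m → Fin m → ℝ) :
    LipschitzWith (Real.toNNReal (m * ‖A‖)) (matMul A) :=
  LipschitzWith.of_dist_le' fun X Y ↦ by
    simpa only [dist_eq_norm, ← matMul_sub] using norm_matMul_le A (X - Y)

theorem eqOn_Icc_of_hasDerivAt_matMul {A f g : ℝ → Fin m → Fin m → ℝ} {a b : ℝ}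
    (hA : ContinuousOn A (Icc a b))
    (hf : ∀ t ∈ Icc a b, HasDerivAt f (matMul (A t) (f t)) t)
    (hg : ∀ t ∈ Icc a b, HasDerivAt g (matMul (A t) (g t)) t) (ha : f a = g a) :
    EqOn f g (Icc a b) := by
  obtain ⟨C, hC⟩ := isCompact_Icc.exists_bound_of_continuousOn hA
  have hlip : ∀ t ∈ Ico a b, LipschitzOnWith (Real.toNNReal (m * C)) (matMul (A t)) univ :=
    fun t ht ↦ ((lipschitzWith_matMul (A t)).weaken <| Real.toNNReal_le_toNNReal <|
      by gcongr; exact hC t (Ico_subset_Icc_self ht)).lipschitzOnWith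
  exact ODE_solution_unique_of_mem_Icc_right hlip
    (fun t ht ↦ (hf t ht).continuousAt.continuousWithinAt)
    (fun t ht ↦ (hf t (Ico_subset_Icc_self ht)).hasDerivWithinAt) (fun _ _ ↦ mem_univ _)
    (fun t ht ↦ (hg t ht).continuousAt.continuousWithinAt)
    (fun t ht ↦ (hg t (Ico_subset_Icc_self ht)).hasDerivWithinAt) (fun _ _ ↦ mem_univ _) ha

end MatMul

lemma IsOpen.eventually_segment_subset {E : Type*} [SeminormedAddCommGroup E] [NormedSpace ℝ E]
    {J : Set E} (hJ : IsOpen J) {x : E} (hx : x ∈ J) : ∀ᶠ y in 𝓝 x, segment ℝ x y ⊆ J := by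
  obtain ⟨ε, hε, hball⟩ := Metric.isOpen_iff.mp hJ x hx
  filter_upwards [Metric.ball_mem_nhds x hε] with y hy
  exact ((convex_ball x ε).segment_subset (Metric.mem_ball_self hε) hy).trans hball

section Segment

variable {p m : ℕ} {J : Set (Fin p → ℝ)} {Z : Fin p → (Fin p → ℝ) → (Fin m → Fin m → ℝ)}
  {Y Y₁ Y₂ : (Fin p → ℝ) → (Fin m → Fin m → ℝ)}

lemma fderiv_apply_eq_matMul {s : Fin p → ℝ}
    (hY : ∀ α, fderiv ℝ Y s (Pi.single α 1) = matMul (Z α s) (Y s)) (v : Fin p → ℝ) :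
    fderiv ℝ Y s v = matMul (∑ α, v α • Z α s) (Y s) := by
  conv_lhs => rw [← Finset.univ_sum_single v]
  simp only [map_sum, sum_smul_matMul, ← hY, ← map_smul, ← Pi.single_smul', smul_eq_mul, mul_one]

lemma hasDerivAt_comp_lineMap {x y : Fin p → ℝ} {t : ℝ}
    (hd : DifferentiableAt ℝ Y (lineMap x y t))
    (hY : ∀ α, fderiv ℝ Y (lineMap x y t) (Pi.single α 1) =
      matMul (Z α (lineMap x y t)) (Y (lineMap x y t))) :
    HasDerivAt (fun t ↦ Y (lineMap x y t))
      (matMul (∑ α, (y - x) α • Z α (lineMap x y t)) (Y (lineMap x y t))) t := by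
  rw [← fderiv_apply_eq_matMul hY]
  exact hd.hasFDerivAt.comp_hasDerivAt t hasDerivAt_lineMap

theorem eq_of_segment_subset (hJ : IsOpen J) (hZ : ∀ α, ContinuousOn (Z α) J)
    (hY₁ : DifferentiableOn ℝ Y₁ J) (hY₂ : DifferentiableOn ℝ Y₂ J)
    (hY₁eq : ∀ s ∈ J, ∀ α, fderiv ℝ Y₁ s (Pi.single α 1) = matMul (Z α s) (Y₁ s))
    (hY₂eq : ∀ s ∈ J, ∀ α, fderiv ℝ Y₂ s (Pi.single α 1) = matMul (Z α s) (Y₂ s))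
    {x y : Fin p → ℝ} (hxy : segment ℝ x y ⊆ J) (hx : Y₁ x = Y₂ x) : Y₁ y = Y₂ y := by
  have hmem : ∀ t ∈ Icc (0 : ℝ) 1, lineMap x y t ∈ J := fun t ht ↦
    hxy (segment_eq_image_lineMap ℝ x y ▸ mem_image_of_mem _ ht)
  have hA : ContinuousOn (fun t : ℝ ↦ ∑ α, (y - x) α • Z α (lineMap x y t)) (Icc 0 1) :=
    continuousOn_finsetSum _ fun α _ ↦ ((hZ α).comp
      (lineMap_continuous (R := ℝ)).continuousOn hmem).const_smul ((y - x) α)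
  have key := eqOn_Icc_of_hasDerivAt_matMul hA
    (fun t ht ↦ hasDerivAt_comp_lineMap (hY₁.differentiableAt (hJ.mem_nhds (hmem t ht)))
      (hY₁eq _ (hmem t ht)))
    (fun t ht ↦ hasDerivAt_comp_lineMap (hY₂.differentiableAt (hJ.mem_nhds (hmem t ht)))
      (hY₂eq _ (hmem t ht)))
    (by simpa using hx) (right_mem_Icc.2 zero_le_one)
  simpa using key

end Segment

theorem solution_unique_general {p m : ℕ}
    (J : Set (Fin p → ℝ)) (hJ : IsOpen J) (hJconn : IsConnected J)
    (s₀ : Fin p → ℝ) (hs₀ : s₀ ∈ J)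
    (Z : Fin p → (Fin p → ℝ) → (Fin m → Fin m → ℝ))
    (hZ : ∀ α, ContinuousOn (Z α) J)
    (Y₁ Y₂ : (Fin p → ℝ) → (Fin m → Fin m → ℝ))
    (hY₁ : ContDiffOn ℝ 1 Y₁ J) (hY₂ : ContDiffOn ℝ 1 Y₂ J)
    (hY₁eq : ∀ s ∈ J, ∀ α, fderiv ℝ Y₁ s (Pi.single α 1) = matMul (Z α s) (Y₁ s))
    (hY₂eq : ∀ s ∈ J, ∀ α, fderiv ℝ Y₂ s (Pi.single α 1) = matMul (Z α s) (Y₂ s))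
    (h₀ : Y₁ s₀ = Y₂ s₀) :
    ∀ s ∈ J, Y₁ s = Y₂ s := by
  have transport {x y} (hxy : segment ℝ x y ⊆ J) : Y₁ x = Y₂ x → Y₁ y = Y₂ y :=
    eq_of_segment_subset hJ hZ (hY₁.differentiableOn one_ne_zero)
      (hY₂.differentiableOn one_ne_zero) hY₁eq hY₂eq hxy
  have locally : ∀ x ∈ J, ∀ᶠ y in 𝓝[J] x, (Y₁ x = Y₂ x ↔ Y₁ y = Y₂ y) := fun x hx ↦ by
    filter_upwards [nhdsWithin_le_nhds (hJ.eventually_segment_subset hx)] with y hxy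
    exact ⟨transport hxy, transport (segment_symm ℝ x y ▸ hxy)⟩
  intro s hs
  exact (hJconn.isPreconnected.induction₂ (fun x y ↦ Y₁ x = Y₂ x ↔ Y₁ y = Y₂ y) locally
    (fun _ _ _ _ _ _ ↦ Iff.trans) (fun _ _ _ _ ↦ Iff.symm) hs₀ hs).1 h₀

/-- Two `C¹` solutions of `∂Y/∂s^α = Z_α Y` on an open connected set `J` that
agree at one point `s₀ ∈ J` agree on all of `J`. -/
theorem solution_unique {p m : ℕ} (hp : 1 ≤ p) (hm : 1 ≤ m)
    (J : Set (Fin p → ℝ)) (hJ : IsOpen J) (hJconn : IsConnected J)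
    (s₀ : Fin p → ℝ) (hs₀ : s₀ ∈ J)
    (Z : Fin p → (Fin p → ℝ) → (Fin m → Fin m → ℝ))
    (hZ : ∀ α, ContinuousOn (Z α) J)
    (Y₁ Y₂ : (Fin p → ℝ) → (Fin m → Fin m → ℝ))
    (hY₁ : ContDiffOn ℝ 1 Y₁ J) (hY₂ : ContDiffOn ℝ 1 Y₂ J)
    (hY₁eq : ∀ s ∈ J, ∀ α, fderiv ℝ Y₁ s (Pi.single α 1) = matMul (Z α s) (Y₁ s))
    (hY₂eq : ∀ s ∈ J, ∀ α, fderiv ℝ Y₂ s (Pi.single α 1) = matMul (Z α s) (Y₂ s))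
    (h₀ : Y₁ s₀ = Y₂ s₀) :
    ∀ s ∈ J, Y₁ s = Y₂ s :=
  solution_unique_general J hJ hJconn s₀ hs₀ Z hZ Y₁ Y₂ hY₁ hY₂ hY₁eq hY₂eq h₀
end

section
/- Let n ≥ 1, let V ⊆ ℝ^n be open, U ⊆ V, and for each k ∈ {1,…,n} let Γ_k : V → M_n(ℝ) be a function. Let A : V → M_n(ℝ) be C¹ with A(x) invertible for every x ∈ V and (∂A/∂x^k)(x) + Γ_k(x)·A(x) = 0 for every x ∈ U and every k ∈ {1,…,n}. Suppose that the frame E_{i'} := Σ_i A^i_{i'} ∂/∂x^i commutes on U, i.e. for all indices i', j', k and every x ∈ U: Σ_j ( A^j_{j'}(x)·(∂A^k_{i'}/∂x^j)(x) − A^j_{i'}(x)·(∂A^k_{j'}/∂x^j)(x) ) = 0. Then (Γ_k(x))^i_{ j} = (Γ_j(x))^i_{ k} for all indices i, j, k and every x ∈ U. -/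
/-- If `A` is an invertible `C¹` matrix function with `∂A/∂x^k + Γ_k A = 0` on
`U` and the frame `E_{i'} = Σ_i A^i_{i'} ∂/∂x^i` commutes on `U`, then the
component matrices `Γ_k` are symmetric on `U`: `(Γ_k)^i_j = (Γ_j)^i_k`. -/
theorem holonomic_implies_torsion_free {n : ℕ} (hn : 1 ≤ n)
    (V : Set (Fin n → ℝ)) (hV : IsOpen V) (U : Set (Fin n → ℝ)) (hUV : U ⊆ V)
    (Γ : Fin n → (Fin n → ℝ) → (Fin n → Fin n → ℝ))
    (A : (Fin n → ℝ) → (Fin n → Fin n → ℝ))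
    (hA : ContDiffOn ℝ 1 A V)
    (hAinv : ∀ x ∈ V, IsUnit (Matrix.of (A x)))
    (hAeq : ∀ x ∈ U, ∀ k, fderiv ℝ A x (Pi.single k 1) + matMul (Γ k x) (A x) = 0)
    (hcomm : ∀ i' j' k : Fin n, ∀ x ∈ U,
      ∑ j, (A x j j' * (fderiv ℝ A x (Pi.single j 1)) k i'
            - A x j i' * (fderiv ℝ A x (Pi.single j 1)) k j') = 0) :
    ∀ i j k : Fin n, ∀ x ∈ U, Γ k x i j = Γ j x i k := by
  intro i j k x hx
  have hD : ∀ l, fderiv ℝ A x (Pi.single l 1) = -(matMul (Γ l x) (A x)) := fun l =>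
    eq_neg_of_add_eq_zero_left (hAeq x hx l)
  set M : Matrix (Fin n) (Fin n) ℝ := Matrix.of (A x) with hM
  set S : Matrix (Fin n) (Fin n) ℝ := Matrix.of (fun a b => Γ a x i b - Γ b x i a) with hS
  have key : M.transpose * S * M = 0 := by
    ext j' i'
    have h := hcomm i' j' i x hx
    simp only [hD, Pi.neg_apply, matMul, mul_neg, neg_mul, sub_neg_eq_add, neg_add_eq_sub,
      Finset.mul_sum, Finset.sum_sub_distrib] at h
    have h' : ∑ a, ∑ b, A x a j' * (Γ a x i b * A x b i')
        = ∑ a, ∑ b, A x a i' * (Γ a x i b * A x b j') := by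
      linarith [h]
    have hentry : (M.transpose * S * M) j' i'
        = ∑ a, ∑ b, A x a j' * (Γ a x i b - Γ b x i a) * A x b i' := by
      simp [Matrix.mul_apply, hM, hS, Finset.sum_mul, Matrix.transpose_apply]
      exact Finset.sum_comm
    rw [hentry]
    have h2 : ∑ a, ∑ b, A x a j' * (Γ b x i a * A x b i')
        = ∑ a, ∑ b, A x a i' * (Γ a x i b * A x b j') := by
      rw [Finset.sum_comm]
      exact Finset.sum_congr rfl fun a _ => Finset.sum_congr rfl fun b _ => by ring
    have h3 : ∀ a b : Fin n, A x a j' * (Γ a x i b - Γ b x i a) * A x b i'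
        = A x a j' * (Γ a x i b * A x b i') - A x a j' * (Γ b x i a * A x b i') := by
      intros; ring
    simp_rw [h3, Finset.sum_sub_distrib]
    rw [h', h2, sub_self]
    rfl
  have hMu := hAinv x (hUV hx)
  have hdet : IsUnit M.det := (Matrix.isUnit_iff_isUnit_det M).mp hMu
  have hdetT : IsUnit M.transpose.det := by simpa [Matrix.det_transpose] using hdet
  have hS0 : S = 0 := by
    have : M.transpose⁻¹ * (M.transpose * S * M) * M⁻¹ = S := by
      rw [Matrix.mul_assoc M.transpose S M, ← Matrix.mul_assoc M.transpose⁻¹,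
        Matrix.nonsing_inv_mul _ hdetT, Matrix.one_mul, Matrix.mul_assoc,
        Matrix.mul_nonsing_inv _ hdet, Matrix.mul_one]
    rw [key] at this
    simpa using this.symm
  have := congrFun (congrFun hS0 k) j
  simp [hS, Matrix.of_apply, sub_eq_zero] at this
  exact this
end
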